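/- arXiv:1702.03578 — 3 statements merged into one kernel-verified Lean document; each statement's English description precedes it below -/
import Mathlib

section
/- Suppose n ≥ 2, the network is complete (g_{ij} = 1 for all i ≠ j), and fix any integer n_t with 0 ≤ n_t < n. Let p be a mixture, with strictly positive mixing weights, of the uniform completely randomized design with exactly n_t treated units and the uniform completely randomized design with exactly n_t + 1 treated units (uniform over all subsets of the corresponding size). Then linear unbiased estimators of β̄ under SANIA exist: for each unit i there are allocations z, z′ in the support with z_i = 1, z′_i = 0, and d_i^z = d_i^{z′} = n_t. -/
open Finset

/-- Treated degree of unit `i` under allocation `z`. -/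
def trDeg {n : ℕ} (g : Fin n → Fin n → Bool) (z : Fin n → Bool) (i : Fin n) : ℕ :=
  (Finset.univ.filter fun j => g j i = true ∧ z j = true).card

/-- Number of treated units under allocation `z`. -/
def numTreated {n : ℕ} (z : Fin n → Bool) : ℕ :=
  (Finset.univ.filter fun i => z i = true).card

/-!
On the complete network the treated degree of `i` is the number of treated units other than `i`,
so every allocation with `n_t + 1` treated units containing `i`, and every allocation with `n_t`
treated units not containing `i`, gives `i` treated degree `n_t`. Under SANIA the outcome of `i`
is therefore constant, `α_i + β_i + Γ_i(n_t)` resp. `α_i + Γ_i(n_t)`, on these two events, and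
both have positive probability under the mixture. The difference of the two inverse-probability
weighted means is then an unbiased estimator of `β_i`, and averaging over `i` estimates `β̄`.
-/

section ContrastWeight

variable {α : Type*} [DecidableEq α]

noncomputable def contrastWeight (p : α → ℝ) (s t : Finset α) (z : α) : ℝ :=
  (if z ∈ s then (∑ x ∈ s, p x)⁻¹ else 0) - (if z ∈ t then (∑ x ∈ t, p x)⁻¹ else 0)

variable [Fintype α]

lemma sum_mul_ite_mem_inv_mul_of_eqOn (p f : α → ℝ) (s : Finset α) (c : ℝ)
    (hs : ∑ x ∈ s, p x ≠ 0) (hf : ∀ z ∈ s, f z = c) :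
    ∑ z, p z * ((if z ∈ s then (∑ x ∈ s, p x)⁻¹ else 0) * f z) = c := by
  calc ∑ z, p z * ((if z ∈ s then (∑ x ∈ s, p x)⁻¹ else 0) * f z)
      = ∑ z ∈ s, p z * ((∑ x ∈ s, p x)⁻¹ * c) := by
        rw [← sum_subset (subset_univ s) fun z _ hz => by simp [hz]]
        exact sum_congr rfl fun z hz => by simp [hz, hf z hz]
    _ = c := by rw [← sum_mul, mul_inv_cancel_left₀ hs]

lemma sum_mul_contrastWeight_mul (p f : α → ℝ) (s t : Finset α) (a b : ℝ)
    (hs : ∑ x ∈ s, p x ≠ 0) (ht : ∑ x ∈ t, p x ≠ 0)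
    (hfs : ∀ z ∈ s, f z = a) (hft : ∀ z ∈ t, f z = b) :
    ∑ z, p z * (contrastWeight p s t z * f z) = a - b := by
  simp only [contrastWeight, sub_mul, mul_sub, sum_sub_distrib]
  rw [sum_mul_ite_mem_inv_mul_of_eqOn p f s a hs hfs,
    sum_mul_ite_mem_inv_mul_of_eqOn p f t b ht hft]

end ContrastWeight

section CompleteNetwork

variable {n : ℕ} (g : Fin n → Fin n → Bool) (hg : ∀ i, g i i = false)
  (hcomp : ∀ i j : Fin n, i ≠ j → g i j = true)
include hg hcomp

lemma trDeg_eq_card_erase_of_complete (z : Fin n → Bool) (i : Fin n) :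
    trDeg g z i = ((univ.filter fun j => z j = true).erase i).card := by
  unfold trDeg
  congr 1
  ext j
  by_cases hj : j = i
  · simp [hj, hg]
  · simp [hj, hcomp j i hj]

lemma trDeg_add_one_of_complete {z : Fin n → Bool} {i : Fin n} (h : z i = true) :
    trDeg g z i + 1 = numTreated z := by
  rw [trDeg_eq_card_erase_of_complete g hg hcomp, card_erase_add_one (by simp [h])]
  rfl

lemma trDeg_eq_numTreated_of_complete {z : Fin n → Bool} {i : Fin n} (h : z i = false) :
    trDeg g z i = numTreated z := by
  rw [trDeg_eq_card_erase_of_complete g hg hcomp, erase_eq_of_notMem (by simp [h])]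
  rfl

end CompleteNetwork

lemma numTreated_decide_mem {n : ℕ} (s : Finset (Fin n)) :
    numTreated (fun j => decide (j ∈ s)) = s.card := by
  simp [numTreated]

lemma exists_allocations_numTreated {n k : ℕ} (i : Fin n) (hk : k < n) :
    ∃ z z' : Fin n → Bool, z i = true ∧ numTreated z = k + 1 ∧
      z' i = false ∧ numTreated z' = k := by
  obtain ⟨s, hs, rfl⟩ : ∃ s ⊆ univ.erase i, s.card = k :=
    exists_subset_card_eq (by simp [card_erase_of_mem]; omega)
  have his : i ∉ s := fun h => (mem_erase.mp (hs h)).1 rfl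
  refine ⟨fun j => decide (j ∈ insert i s), fun j => decide (j ∈ s), by simp, ?_, by simp [his],
    numTreated_decide_mem s⟩
  rw [numTreated_decide_mem, card_insert_of_notMem his]

theorem stmt_12_general (n : ℕ) (nt : ℕ) (hnt : nt < n)
    (g : Fin n → Fin n → Bool) (hg : ∀ i, g i i = false)
    (hcomp : ∀ i j : Fin n, i ≠ j → g i j = true)
    (q₁ q₂ : ℝ) (hq₁ : 0 < q₁) (hq₂ : 0 < q₂)
    (p : (Fin n → Bool) → ℝ)
    (hp : ∀ z, p z =
      q₁ * (if numTreated z = nt then (1 : ℝ) / (n.choose nt) else 0) +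
      q₂ * (if numTreated z = nt + 1 then (1 : ℝ) / (n.choose (nt + 1)) else 0)) :
    (∀ i : Fin n, ∃ z z' : Fin n → Bool,
      0 < p z ∧ 0 < p z' ∧ z i = true ∧ z' i = false ∧
      trDeg g z i = nt ∧ trDeg g z' i = nt) ∧
    (∃ w : Fin n → (Fin n → Bool) → ℝ,
      ∀ (α β : Fin n → ℝ) (Γ : Fin n → ℕ → ℝ), (∀ i, Γ i 0 = 0) →
        ∑ z, p z * ∑ i, w i z *
            (α i + β i * (if z i then (1 : ℝ) else 0) + Γ i (trDeg g z i))
          = (1 / (n : ℝ)) * ∑ i, β i) := by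
  have hchoose : ∀ k ≤ n, (0 : ℝ) < n.choose k := fun k hk => by
    exact_mod_cast Nat.choose_pos hk
  have hp₀ : ∀ z, numTreated z = nt → 0 < p z := fun z hz => by
    rw [hp, hz, if_pos rfl, if_neg (by omega)]
    have := hchoose nt hnt.le
    positivity
  have hp₁ : ∀ z, numTreated z = nt + 1 → 0 < p z := fun z hz => by
    rw [hp, hz, if_neg (by omega), if_pos rfl]
    have := hchoose (nt + 1) hnt
    positivity
  set E₁ : Fin n → Finset (Fin n → Bool) :=
    fun i => univ.filter fun z => z i = true ∧ numTreated z = nt + 1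
  set E₀ : Fin n → Finset (Fin n → Bool) :=
    fun i => univ.filter fun z => z i = false ∧ numTreated z = nt
  refine ⟨fun i => ?_, ⟨fun i z => contrastWeight p (E₁ i) (E₀ i) z / n, fun α β Γ _ => ?_⟩⟩
  · obtain ⟨z, z', hzi, hz, hz'i, hz'⟩ := exists_allocations_numTreated i hnt
    refine ⟨z, z', hp₁ z hz, hp₀ z' hz', hzi, hz'i, ?_, ?_⟩
    · have := trDeg_add_one_of_complete g hg hcomp hzi
      omega
    · rw [trDeg_eq_numTreated_of_complete g hg hcomp hz'i, hz']
  have hmass : ∀ i, 0 < ∑ z ∈ E₁ i, p z ∧ 0 < ∑ z ∈ E₀ i, p z := fun i => by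
    obtain ⟨z, z', hzi, hz, hz'i, hz'⟩ := exists_allocations_numTreated i hnt
    exact ⟨sum_pos (fun x hx => hp₁ x (mem_filter.1 hx).2.2) ⟨z, by simp [E₁, hzi, hz]⟩,
      sum_pos (fun x hx => hp₀ x (mem_filter.1 hx).2.2) ⟨z', by simp [E₀, hz'i, hz']⟩⟩
  calc ∑ z, p z * ∑ i, contrastWeight p (E₁ i) (E₀ i) z / n *
          (α i + β i * (if z i then (1 : ℝ) else 0) + Γ i (trDeg g z i))
      = ∑ i, (∑ z, p z * (contrastWeight p (E₁ i) (E₀ i) z *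
          (α i + β i * (if z i then (1 : ℝ) else 0) + Γ i (trDeg g z i)))) / n := by
        simp only [mul_sum, sum_div]
        rw [sum_comm]
        exact sum_congr rfl fun i _ => sum_congr rfl fun z _ => by ring
    _ = ∑ i, β i / n := sum_congr rfl fun i _ => by
        rw [sum_mul_contrastWeight_mul p _ (E₁ i) (E₀ i) (α i + β i + Γ i nt) (α i + Γ i nt)
          (hmass i).1.ne' (hmass i).2.ne']
        · ring
        · intro z hz
          obtain ⟨hzi, hz⟩ := mem_filter.1 hz |>.2
          have := trDeg_add_one_of_complete g hg hcomp hzi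
          rw [hzi, show trDeg g z i = nt by omega]
          simp
        · intro z hz
          obtain ⟨hzi, hz⟩ := mem_filter.1 hz |>.2
          rw [hzi, trDeg_eq_numTreated_of_complete g hg hcomp hzi, hz]
          simp
    _ = 1 / (n : ℝ) * ∑ i, β i := by rw [← sum_div]; ring

/-- on the complete network with `n ≥ 2` units, a mixture (with strictly
positive weights) of the uniform completely randomized designs with `n_t` and `n_t + 1`
treated units (`0 ≤ n_t < n`) admits linear unbiased estimators of `β̄` under SANIA:
for each unit `i` there are supported allocations `z, z'` with `zᵢ = 1`, `z'ᵢ = 0` and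
`dᵢ^z = dᵢ^{z'} = n_t`. -/
theorem stmt_12 (n : ℕ) (hn : 2 ≤ n) (nt : ℕ) (hnt : nt < n)
    (g : Fin n → Fin n → Bool) (hg : ∀ i, g i i = false)
    (hcomp : ∀ i j : Fin n, i ≠ j → g i j = true)
    (q₁ q₂ : ℝ) (hq₁ : 0 < q₁) (hq₂ : 0 < q₂) (hq : q₁ + q₂ = 1)
    (p : (Fin n → Bool) → ℝ)
    (hp : ∀ z, p z =
      q₁ * (if numTreated z = nt then (1 : ℝ) / (n.choose nt) else 0) +
      q₂ * (if numTreated z = nt + 1 then (1 : ℝ) / (n.choose (nt + 1)) else 0)) :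
    (∀ i : Fin n, ∃ z z' : Fin n → Bool,
      0 < p z ∧ 0 < p z' ∧ z i = true ∧ z' i = false ∧
      trDeg g z i = nt ∧ trDeg g z' i = nt) ∧
    (∃ w : Fin n → (Fin n → Bool) → ℝ,
      ∀ (α β : Fin n → ℝ) (Γ : Fin n → ℕ → ℝ), (∀ i, Γ i 0 = 0) →
        ∑ z, p z * ∑ i, w i z *
            (α i + β i * (if z i then (1 : ℝ) else 0) + Γ i (trDeg g z i))
          = (1 / (n : ℝ)) * ∑ i, β i) :=
  stmt_12_general n nt hnt g hg hcomp q₁ q₂ hq₁ hq₂ p hp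
end

section
/- (SANIA, uncorrelated prior.) Fix a design p and a network g. For each unit i let σ_i : {0,1} × {0,1,…,d_i} → ℝ be strictly positive (the prior variance of the observed outcome of unit i as a function of its own treatment and treated degree, under a mean-zero prior uncorrelated across units), and let π_i(a,d) := ∑_z p(z) 1{z_i = a, d_i^z = d}. Define, for d ∈ {0,…,d_i}, C_{i,d} = (σ_i(0,d)/π_i(0,d) + σ_i(1,d)/π_i(1,d))^{−1} if both π_i(0,d) > 0 and π_i(1,d) > 0, and C_{i,d} = 0 otherwise; assume ∑_{d} C_{i,d} > 0 for every i (equivalently, linear unbiased estimators exist). Consider minimizing IV(w) = ∑_z p(z) ∑_i w_i(z)² σ_i(z_i, d_i^z) over all weights w satisfying, for every unit i, (C1) ∑_z p(z) w_i(z) z_i = 1/n, (C2) ∑_z p(z) w_i(z) = 0, and (C3′) ∑_z p(z) w_i(z) 1{d_i^z = d} = 0 for every d ∈ {1,…,d_i}. Then the weights w*_i(z) = (C_{i,d_i^z}/∑_d C_{i,d}) · (2z_i − 1)/(n π_i(z_i, d_i^z)) (interpreted as 0 whenever C_{i,d_i^z} = 0) satisfy the constraints and minimize IV: for every w satisfying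 the constraints, IV(w*) ≤ IV(w). -/
open Finset
open scoped Classical

/-- Degree of unit `i`. -/
def deg {n : ℕ} (g : Fin n → Fin n → Bool) (i : Fin n) : ℕ :=
  (Finset.univ.filter fun j => g j i = true).card

/-!
The problem decouples over units. For a fixed unit, group the allocations into the cells
`{zᵢ = a, dᵢ^z = d}`. The constraints C1, C2, C3′ only see the cell moments
`mₐ(d) = ∑_z p(z) w(z) 1{zᵢ = a, dᵢ^z = d}`: they say `∑_d m₁(d) = 1/n` and `m₀(d) + m₁(d) = 0`
for every `d`. The weight `w*` is constant on cells, and `w* σ = h(dᵢ^z) + zᵢ κ(dᵢ^z)` for some `h`,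
with `κ(d) = 1/(n ∑_d C_d)` wherever `C_d ≠ 0` and `κ(d) = 0` otherwise; for those `d` every
feasible `w` has `m₁(d) = 0`. Hence `∑_z p w w* σ = ∑_d m₁(d) κ(d)` takes the same value on all
feasible `w`, i.e. `w - w*` is `σ`-orthogonal to `w*`, and `IV(w) = IV(w*) + IV(w - w*) ≥ IV(w*)`.
-/

lemma trDeg_le {n : ℕ} (g : Fin n → Fin n → Bool) (z : Fin n → Bool) (i : Fin n) :
    trDeg g z i ≤ deg g i :=
  card_le_card fun _ hj => by simp only [mem_filter] at *; tauto

lemma sum_range_succ_eq_zero_and_iff {M : Type*} [AddCommMonoid M] {t : ℕ → M} {D : ℕ} :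
    (∑ d ∈ range (D + 1), t d = 0 ∧ ∀ d, 1 ≤ d → d ≤ D → t d = 0) ↔
      ∀ d ∈ range (D + 1), t d = 0 := by
  constructor
  · rintro ⟨hsum, hpos⟩
    have htail : ∀ d ∈ range D, t (d + 1) = 0 := fun d hd =>
      hpos (d + 1) (by omega) (by simp only [mem_range] at hd; omega)
    rw [sum_range_succ', sum_eq_zero htail, zero_add] at hsum
    intro d hd
    rcases d with _ | d
    · exact hsum
    · exact hpos (d + 1) (by omega) (by simp only [mem_range] at hd; omega)
  · intro h
    exact ⟨sum_eq_zero h, fun d h1 h2 => h d (by simp only [mem_range]; omega)⟩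

lemma sum_mul_sq_mul_le_of_sum_eq {Ω : Type*} [Fintype Ω] {p s x v : Ω → ℝ}
    (hp : ∀ ω, 0 ≤ p ω) (hs : ∀ ω, 0 ≤ s ω)
    (h : ∑ ω, p ω * v ω * (x ω * s ω) = ∑ ω, p ω * x ω * (x ω * s ω)) :
    ∑ ω, p ω * (x ω ^ 2 * s ω) ≤ ∑ ω, p ω * (v ω ^ 2 * s ω) := by
  have hexpand : ∑ ω, p ω * (v ω ^ 2 * s ω) - ∑ ω, p ω * (x ω ^ 2 * s ω) =
      ∑ ω, p ω * ((v ω - x ω) ^ 2 * s ω) +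
        2 * (∑ ω, p ω * v ω * (x ω * s ω) - ∑ ω, p ω * x ω * (x ω * s ω)) := by
    simp only [mul_sub, ← sum_sub_distrib, mul_sum, ← sum_add_distrib]
    exact sum_congr rfl fun ω _ => by ring
  have hnonneg : 0 ≤ ∑ ω, p ω * ((v ω - x ω) ^ 2 * s ω) :=
    sum_nonneg fun ω _ => mul_nonneg (hp ω) (mul_nonneg (sq_nonneg _) (hs ω))
  rw [h, sub_self, mul_zero, add_zero] at hexpand
  linarith

section Cells

variable {Ω : Type*} [Fintype Ω] (a : Ω → Bool) (δ : Ω → ℕ)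

def cellSum (q : Ω → ℝ) (b : Bool) (d : ℕ) : ℝ :=
  ∑ ω, q ω * if a ω = b ∧ δ ω = d then 1 else 0

lemma cellSum_mul_comp (q : Ω → ℝ) (f : Bool → ℕ → ℝ) (b : Bool) (d : ℕ) :
    cellSum a δ (fun ω => q ω * f (a ω) (δ ω)) b d = cellSum a δ q b d * f b d := by
  rw [cellSum, cellSum, sum_mul]
  refine sum_congr rfl fun ω _ => ?_
  split_ifs with h
  · rw [h.1, h.2]; ring
  · ring

lemma cellSum_nonneg {q : Ω → ℝ} (hq : ∀ ω, 0 ≤ q ω) (b : Bool) (d : ℕ) :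
    0 ≤ cellSum a δ q b d :=
  sum_nonneg fun ω _ => mul_nonneg (hq ω) (by split_ifs <;> norm_num)

lemma cellSum_mul_eq_zero {p : Ω → ℝ} (hp : ∀ ω, 0 ≤ p ω) {b : Bool} {d : ℕ}
    (h : cellSum a δ p b d = 0) (v : Ω → ℝ) :
    cellSum a δ (fun ω => p ω * v ω) b d = 0 := by
  have hterm := (sum_eq_zero_iff_of_nonneg fun ω _ =>
    mul_nonneg (hp ω) (by split_ifs <;> norm_num)).1 h
  exact sum_eq_zero fun ω hω => by rw [mul_right_comm, hterm ω hω, zero_mul]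

lemma sum_mul_ite_eq_cellSum_add (q : Ω → ℝ) (d : ℕ) :
    ∑ ω, q ω * (if δ ω = d then 1 else 0) = cellSum a δ q false d + cellSum a δ q true d := by
  rw [cellSum, cellSum, ← sum_add_distrib]
  exact sum_congr rfl fun ω _ => by cases a ω <;> simp

lemma sum_mul_eq_sum_cellSum {D : ℕ} (hδ : ∀ ω, δ ω ≤ D) (q : Ω → ℝ) (f : Bool → ℕ → ℝ) :
    ∑ ω, q ω * f (a ω) (δ ω) = ∑ d ∈ range (D + 1),
      (cellSum a δ q false d * f false d + cellSum a δ q true d * f true d) := by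
  simp_rw [cellSum, sum_mul, ← sum_add_distrib]
  rw [sum_comm]
  refine sum_congr rfl fun ω _ => ?_
  rw [sum_eq_single_of_mem (δ ω) (mem_range.2 (Nat.lt_succ_of_le (hδ ω)))]
  · cases a ω <;> simp
  · intro d _ hd
    simp [Ne.symm hd]

lemma sum_eq_sum_cellSum_add {D : ℕ} (hδ : ∀ ω, δ ω ≤ D) (q : Ω → ℝ) :
    ∑ ω, q ω = ∑ d ∈ range (D + 1), (cellSum a δ q false d + cellSum a δ q true d) := by
  simpa using sum_mul_eq_sum_cellSum a δ hδ q fun _ _ => 1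

lemma sum_mul_ite_eq_sum_cellSum {D : ℕ} (hδ : ∀ ω, δ ω ≤ D) (q : Ω → ℝ) :
    ∑ ω, q ω * (if a ω then 1 else 0) = ∑ d ∈ range (D + 1), cellSum a δ q true d := by
  simpa using sum_mul_eq_sum_cellSum a δ hδ q fun b _ => if b then 1 else 0

/-- Constraints C1, C2, C3′ on the weight `v` of a unit with own treatment `a`, treated degree `δ`
and degree `D`; the theorem has `c = 1 / n`. -/
def IsUnbiasedWeight (p : Ω → ℝ) (D : ℕ) (c : ℝ) (v : Ω → ℝ) : Prop :=
  (∑ ω, p ω * v ω * (if a ω then (1 : ℝ) else 0)) = c ∧ (∑ ω, p ω * v ω) = 0 ∧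
    ∀ d : ℕ, 1 ≤ d → d ≤ D → (∑ ω, p ω * v ω * (if δ ω = d then (1 : ℝ) else 0)) = 0

lemma isUnbiasedWeight_iff {p : Ω → ℝ} {D : ℕ} (hδ : ∀ ω, δ ω ≤ D) {c : ℝ} {v : Ω → ℝ} :
    IsUnbiasedWeight a δ p D c v ↔
      ∑ d ∈ range (D + 1), cellSum a δ (fun ω => p ω * v ω) true d = c ∧
        ∀ d ∈ range (D + 1), cellSum a δ (fun ω => p ω * v ω) false d +
          cellSum a δ (fun ω => p ω * v ω) true d = 0 := by
  rw [IsUnbiasedWeight, sum_mul_ite_eq_sum_cellSum a δ hδ, sum_eq_sum_cellSum_add a δ hδ,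
    ← sum_range_succ_eq_zero_and_iff]
  simp only [sum_mul_ite_eq_cellSum_add a δ (fun ω => p ω * v ω)]

end Cells

section OptimalWeight

variable (π σ : Bool → ℕ → ℝ)

noncomputable def cellPrecision (d : ℕ) : ℝ :=
  if 0 < π false d ∧ 0 < π true d then (σ false d / π false d + σ true d / π true d)⁻¹ else 0

noncomputable def cellWeight (D : ℕ) (N : ℝ) (b : Bool) (d : ℕ) : ℝ :=
  (cellPrecision π σ d / ∑ d' ∈ range (D + 1), cellPrecision π σ d') *
    ((if b then (2 : ℝ) else 0) - 1) / (N * π b d)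

variable {π σ} {d : ℕ}

lemma mass_pos_of_cellPrecision_ne_zero (h : cellPrecision π σ d ≠ 0) :
    0 < π false d ∧ 0 < π true d := by
  by_contra hπ
  exact h (if_neg hπ)

lemma cellPrecision_ne_zero (hσ : ∀ b, 0 < σ b d) (h0 : 0 < π false d) (h1 : 0 < π true d) :
    cellPrecision π σ d ≠ 0 := by
  have := hσ false
  have := hσ true
  rw [cellPrecision, if_pos ⟨h0, h1⟩]
  positivity

variable {D : ℕ} {N : ℝ}

lemma mul_cellWeight (hS : ∑ d ∈ range (D + 1), cellPrecision π σ d ≠ 0) (hN : N ≠ 0)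
    (b : Bool) :
    π b d * cellWeight π σ D N b d = ((if b then (2 : ℝ) else 0) - 1) * cellPrecision π σ d /
      ((∑ d ∈ range (D + 1), cellPrecision π σ d) * N) := by
  by_cases h : cellPrecision π σ d = 0
  · simp [cellWeight, h]
  have hπ : π b d ≠ 0 := by
    obtain ⟨h0, h1⟩ := mass_pos_of_cellPrecision_ne_zero h
    cases b
    exacts [h0.ne', h1.ne']
  unfold cellWeight
  field_simp

/-- `cellPrecision` is exactly the factor that makes the jump of `w* σ` between the two cells at
treated degree `d` independent of `d`. -/
lemma cellWeight_true_mul (hS : ∑ d ∈ range (D + 1), cellPrecision π σ d ≠ 0) (hN : N ≠ 0)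
    (hσ : ∀ b, 0 < σ b d) :
    cellWeight π σ D N true d * σ true d = cellWeight π σ D N false d * σ false d +
      if cellPrecision π σ d = 0 then 0
      else ((∑ d ∈ range (D + 1), cellPrecision π σ d) * N)⁻¹ := by
  by_cases h : cellPrecision π σ d = 0
  · simp [cellWeight, h]
  obtain ⟨h0, h1⟩ := mass_pos_of_cellPrecision_ne_zero h
  have := hσ false
  have := hσ true
  rw [if_neg h, cellWeight, cellWeight]
  generalize ∑ d ∈ range (D + 1), cellPrecision π σ d = S at hS ⊢
  rw [cellPrecision, if_pos ⟨h0, h1⟩]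
  simp only [↓reduceIte, Bool.false_eq_true]
  field_simp
  ring

end OptimalWeight

section Unit

variable {Ω : Type*} [Fintype Ω] {p : Ω → ℝ} {a : Ω → Bool} {δ : Ω → ℕ} {D : ℕ}
  {π σ : Bool → ℕ → ℝ} {N : ℝ}

theorem isUnbiasedWeight_cellWeight (hδ : ∀ ω, δ ω ≤ D)
    (hπ : ∀ b d, π b d = cellSum a δ p b d)
    (hS : ∑ d ∈ range (D + 1), cellPrecision π σ d ≠ 0) (hN : N ≠ 0) :
    IsUnbiasedWeight a δ p D (1 / N) (fun ω => cellWeight π σ D N (a ω) (δ ω)) := by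
  have hm : ∀ b d, cellSum a δ (fun ω => p ω * cellWeight π σ D N (a ω) (δ ω)) b d =
      ((if b then (2 : ℝ) else 0) - 1) * cellPrecision π σ d /
        ((∑ d ∈ range (D + 1), cellPrecision π σ d) * N) :=
    fun b d => by rw [cellSum_mul_comp, ← hπ, mul_cellWeight hS hN]
  rw [isUnbiasedWeight_iff a δ hδ]
  simp only [hm, ↓reduceIte, Bool.false_eq_true]
  constructor
  · rw [← sum_div, ← mul_sum]
    field_simp
    ring
  · intro d _
    ring

lemma cellSum_true_eq_zero_of_cellPrecision_eq_zero (hp : ∀ ω, 0 ≤ p ω) {d : ℕ}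
    (hσ : ∀ b, 0 < σ b d) (hπ : ∀ b d, π b d = cellSum a δ p b d)
    (hCd : cellPrecision π σ d = 0) {v : Ω → ℝ}
    (hv : cellSum a δ (fun ω => p ω * v ω) false d +
      cellSum a δ (fun ω => p ω * v ω) true d = 0) :
    cellSum a δ (fun ω => p ω * v ω) true d = 0 := by
  by_cases h1 : π true d = 0
  · exact cellSum_mul_eq_zero a δ hp ((hπ true d).symm.trans h1) v
  have hπ_nonneg : ∀ b, 0 ≤ π b d := fun b => hπ b d ▸ cellSum_nonneg a δ hp b d
  have h0 : π false d = 0 := by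
    by_contra h0
    exact cellPrecision_ne_zero hσ ((hπ_nonneg false).lt_of_ne' h0)
      ((hπ_nonneg true).lt_of_ne' h1) hCd
  have := cellSum_mul_eq_zero a δ hp ((hπ false d).symm.trans h0) v
  linarith

theorem sum_mul_cellWeight_mul_eq (hp : ∀ ω, 0 ≤ p ω) (hσ : ∀ b d, 0 < σ b d)
    (hδ : ∀ ω, δ ω ≤ D) (hπ : ∀ b d, π b d = cellSum a δ p b d)
    (hS : ∑ d ∈ range (D + 1), cellPrecision π σ d ≠ 0) (hN : N ≠ 0) {c : ℝ} {v : Ω → ℝ}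
    (hv : IsUnbiasedWeight a δ p D c v) :
    ∑ ω, p ω * v ω * (cellWeight π σ D N (a ω) (δ ω) * σ (a ω) (δ ω)) =
      c / ((∑ d ∈ range (D + 1), cellPrecision π σ d) * N) := by
  set m := cellSum a δ (fun ω => p ω * v ω)
  obtain ⟨hc, hcell⟩ := (isUnbiasedWeight_iff a δ hδ).1 hv
  rw [sum_mul_eq_sum_cellSum a δ hδ (fun ω => p ω * v ω)
    (fun b d => cellWeight π σ D N b d * σ b d), ← hc, sum_div]
  refine sum_congr rfl fun d hd => ?_
  rw [cellWeight_true_mul hS hN (fun b => hσ b d)]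
  split_ifs with hCd
  · have h1 : m true d = 0 :=
      cellSum_true_eq_zero_of_cellPrecision_eq_zero hp (fun b => hσ b d) hπ hCd (hcell d hd)
    linear_combination (cellWeight π σ D N false d * σ false d) * hcell d hd -
      ((∑ d ∈ range (D + 1), cellPrecision π σ d) * N)⁻¹ * h1
  · linear_combination (cellWeight π σ D N false d * σ false d) * hcell d hd

theorem sum_cellWeight_sq_mul_le (hp : ∀ ω, 0 ≤ p ω) (hσ : ∀ b d, 0 < σ b d)
    (hδ : ∀ ω, δ ω ≤ D) (hπ : ∀ b d, π b d = cellSum a δ p b d)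
    (hS : ∑ d ∈ range (D + 1), cellPrecision π σ d ≠ 0) (hN : N ≠ 0) {v : Ω → ℝ}
    (hv : IsUnbiasedWeight a δ p D (1 / N) v) :
    ∑ ω, p ω * (cellWeight π σ D N (a ω) (δ ω) ^ 2 * σ (a ω) (δ ω)) ≤
      ∑ ω, p ω * (v ω ^ 2 * σ (a ω) (δ ω)) := by
  refine sum_mul_sq_mul_le_of_sum_eq hp (fun ω => (hσ _ _).le) ?_
  rw [sum_mul_cellWeight_mul_eq hp hσ hδ hπ hS hN hv,
    sum_mul_cellWeight_mul_eq hp hσ hδ hπ hS hN (isUnbiasedWeight_cellWeight hδ hπ hS hN)]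

end Unit

theorem stmt_15_general (n : ℕ)
    (g : Fin n → Fin n → Bool)
    (p : (Fin n → Bool) → ℝ) (hp0 : ∀ z, 0 ≤ p z)
    (σ : Fin n → Bool → ℕ → ℝ) (hσ : ∀ i a d, 0 < σ i a d)
    (π : Fin n → Bool → ℕ → ℝ)
    (hπ : ∀ i a d, π i a d =
      ∑ z, p z * (if z i = a ∧ trDeg g z i = d then (1 : ℝ) else 0))
    (C : Fin n → ℕ → ℝ)
    (hC : ∀ i d, C i d =
      if 0 < π i false d ∧ 0 < π i true d
      then (σ i false d / π i false d + σ i true d / π i true d)⁻¹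
      else 0)
    (hCpos : ∀ i, 0 < ∑ d ∈ Finset.range (deg g i + 1), C i d)
    (wstar : Fin n → (Fin n → Bool) → ℝ)
    (hws : ∀ i z, wstar i z =
      (C i (trDeg g z i) / ∑ d ∈ Finset.range (deg g i + 1), C i d) *
        ((if z i then (2 : ℝ) else 0) - 1) / ((n : ℝ) * π i (z i) (trDeg g z i))) :
    ((∀ i : Fin n,
        (∑ z, p z * wstar i z * (if z i then (1 : ℝ) else 0)) = 1 / (n : ℝ) ∧
        (∑ z, p z * wstar i z) = 0 ∧
        (∀ d : ℕ, 1 ≤ d → d ≤ deg g i →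
          (∑ z, p z * wstar i z * (if trDeg g z i = d then (1 : ℝ) else 0)) = 0)) ∧
      (∀ w : Fin n → (Fin n → Bool) → ℝ,
        (∀ i : Fin n,
          (∑ z, p z * w i z * (if z i then (1 : ℝ) else 0)) = 1 / (n : ℝ) ∧
          (∑ z, p z * w i z) = 0 ∧
          (∀ d : ℕ, 1 ≤ d → d ≤ deg g i →
            (∑ z, p z * w i z * (if trDeg g z i = d then (1 : ℝ) else 0)) = 0)) →
        (∑ z, p z * ∑ i, (wstar i z) ^ 2 * σ i (z i) (trDeg g z i)) ≤
          (∑ z, p z * ∑ i, (w i z) ^ 2 * σ i (z i) (trDeg g z i)))) := by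
  obtain rfl : C = fun i => cellPrecision (π i) (σ i) := funext₂ hC
  obtain rfl : wstar = fun i z => cellWeight (π i) (σ i) (deg g i) n (z i) (trDeg g z i) :=
    funext₂ hws
  have hN : ∀ i : Fin n, (n : ℝ) ≠ 0 := fun i => Nat.cast_ne_zero.2 i.pos.ne'
  refine ⟨fun i => isUnbiasedWeight_cellWeight (trDeg_le g · i) (hπ i) (hCpos i).ne' (hN i),
    fun w hw => ?_⟩
  simp only [mul_sum]
  rw [sum_comm]
  conv_rhs => rw [sum_comm]
  exact sum_le_sum fun i _ =>
    sum_cellWeight_sq_mul_le hp0 (hσ i) (trDeg_le g · i) (hπ i) (hCpos i).ne' (hN i) (hw i)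

/-- SANIA, uncorrelated prior: the weights
`w*ᵢ(z) = (C_{i,dᵢ^z}/∑_d C_{i,d}) (2zᵢ-1)/(n πᵢ(zᵢ, dᵢ^z))` satisfy the SANIA
unbiasedness constraints C1, C2, C3′ and minimize
`IV(w) = ∑_z p(z) ∑ᵢ wᵢ(z)² σᵢ(zᵢ, dᵢ^z)` among all weights satisfying them. -/
theorem stmt_15 (n : ℕ) (hn : 1 ≤ n)
    (g : Fin n → Fin n → Bool) (hg : ∀ i, g i i = false)
    (p : (Fin n → Bool) → ℝ) (hp0 : ∀ z, 0 ≤ p z) (hp1 : ∑ z, p z = 1)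
    (σ : Fin n → Bool → ℕ → ℝ) (hσ : ∀ i a d, 0 < σ i a d)
    (π : Fin n → Bool → ℕ → ℝ)
    (hπ : ∀ i a d, π i a d =
      ∑ z, p z * (if z i = a ∧ trDeg g z i = d then (1 : ℝ) else 0))
    (C : Fin n → ℕ → ℝ)
    (hC : ∀ i d, C i d =
      if 0 < π i false d ∧ 0 < π i true d
      then (σ i false d / π i false d + σ i true d / π i true d)⁻¹
      else 0)
    (hCpos : ∀ i, 0 < ∑ d ∈ Finset.range (deg g i + 1), C i d)
    (wstar : Fin n → (Fin n → Bool) → ℝ)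
    (hws : ∀ i z, wstar i z =
      (C i (trDeg g z i) / ∑ d ∈ Finset.range (deg g i + 1), C i d) *
        ((if z i then (2 : ℝ) else 0) - 1) / ((n : ℝ) * π i (z i) (trDeg g z i))) :
    ((∀ i : Fin n,
        (∑ z, p z * wstar i z * (if z i then (1 : ℝ) else 0)) = 1 / (n : ℝ) ∧
        (∑ z, p z * wstar i z) = 0 ∧
        (∀ d : ℕ, 1 ≤ d → d ≤ deg g i →
          (∑ z, p z * wstar i z * (if trDeg g z i = d then (1 : ℝ) else 0)) = 0)) ∧
      (∀ w : Fin n → (Fin n → Bool) → ℝ,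
        (∀ i : Fin n,
          (∑ z, p z * w i z * (if z i then (1 : ℝ) else 0)) = 1 / (n : ℝ) ∧
          (∑ z, p z * w i z) = 0 ∧
          (∀ d : ℕ, 1 ≤ d → d ≤ deg g i →
            (∑ z, p z * w i z * (if trDeg g z i = d then (1 : ℝ) else 0)) = 0)) →
        (∑ z, p z * ∑ i, (wstar i z) ^ 2 * σ i (z i) (trDeg g z i)) ≤
          (∑ z, p z * ∑ i, (w i z) ^ 2 * σ i (z i) (trDeg g z i)))) :=
  stmt_15_general n g p hp0 σ hσ π hπ C hC hCpos wstar hws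
end

section
/- (NIA, uncorrelated prior.) Fix a design p and a network g. For each unit i let σ_i : {0,1}^n → ℝ be strictly positive with σ_i(z) depending on z only through (z_i, z_{N_i}) (the prior variance of unit i's observed outcome under a mean-zero prior uncorrelated across units). Assume π_i(a) := ∑_z p(z) 1{z_i = a, d_i^z = 0} > 0 for each unit i and each a ∈ {0,1}. Consider minimizing IV(w) = ∑_z p(z) ∑_i w_i(z)² σ_i(z) over all weights w satisfying the NIA unbiasedness constraints: for every unit i, (C1) ∑_z p(z)w_i(z)z_i = 1/n, (C2) ∑_z p(z)w_i(z) = 0, and for every nonzero z′ ∈ {0,1}^{N_i}, (C3) ∑_z p(z)w_i(z)1{z_{N_i}=z′} = 0 and (C4) ∑_z p(z)w_i(z)z_i 1{z_{N_i}=z′} = 0. Then the weights w*_i(z) = (2z_i − 1)·1{d_i^z = 0}/(n π_i(z_i)) satisfy the constraints and minimize IV: for every w satisfying the constraints, IV(w*) ≤ IV(w). In particular the minimizer places nonzero weight only on units with no treated neighbors. -/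
open Finset

/-- The NIA unbiasedness constraints C1–C4 on the weights `w`. -/
def ConstraintsNIA {n : ℕ} (g : Fin n → Fin n → Bool)
    (p : (Fin n → Bool) → ℝ) (w : Fin n → (Fin n → Bool) → ℝ) : Prop :=
  ∀ i : Fin n,
    -- (C1)
    (∑ z, p z * w i z * (if z i then (1 : ℝ) else 0)) = 1 / (n : ℝ) ∧
    -- (C2)
    (∑ z, p z * w i z) = 0 ∧
    -- (C3)
    (∀ z' : {j : Fin n // g j i = true} → Bool, z' ≠ (fun _ => false) →
      (∑ z, p z * w i z *
        (if (fun j : {j : Fin n // g j i = true} => z j.1) = z' then (1 : ℝ) else 0)) = 0) ∧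
    -- (C4)
    (∀ z' : {j : Fin n // g j i = true} → Bool, z' ≠ (fun _ => false) →
      (∑ z, p z * w i z * (if z i then (1 : ℝ) else 0) *
        (if (fun j : {j : Fin n // g j i = true} => z j.1) = z' then (1 : ℝ) else 0)) = 0)

lemma trDeg_eq_zero_iff {n : ℕ} (g : Fin n → Fin n → Bool) (z : Fin n → Bool) (i : Fin n) :
    trDeg g z i = 0 ↔ (fun j : {j : Fin n // g j i = true} => z j.1) = (fun _ => false) := by
  simp only [trDeg, Finset.card_eq_zero, Finset.filter_eq_empty_iff, funext_iff]
  constructor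
  · intro h j
    by_contra hz
    exact h (Finset.mem_univ j.1) ⟨j.2, by simpa using hz⟩
  · rintro h j - ⟨hgj, hz⟩
    have := h ⟨j, hgj⟩
    simp only at this
    rw [hz] at this
    exact Bool.true_eq_false.mp this

lemma trDeg_zero_nb {n : ℕ} (g : Fin n → Fin n → Bool) (z : Fin n → Bool) (i : Fin n)
    (h : trDeg g z i = 0) : ∀ j, g j i = true → z j = false := by
  intro j hj
  have := congrFun ((trDeg_eq_zero_iff g z i).mp h) ⟨j, hj⟩
  simpa using this

lemma delta_eq {n : ℕ} (g : Fin n → Fin n → Bool) (z : Fin n → Bool) (i : Fin n) :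
    (if trDeg g z i = 0 then (1:ℝ) else 0)
      = 1 - ∑ z' ∈ Finset.univ.erase (fun _ : {j : Fin n // g j i = true} => false),
          (if (fun j : {j : Fin n // g j i = true} => z j.1) = z' then (1:ℝ) else 0) := by
  rw [Finset.sum_erase_eq_sub (Finset.mem_univ _), Finset.sum_ite_eq]
  simp only [Finset.mem_univ, if_true]
  by_cases h : trDeg g z i = 0
  · rw [if_pos h, if_pos ((trDeg_eq_zero_iff g z i).mp h)]; ring
  · rw [if_neg h, if_neg (fun hc => h ((trDeg_eq_zero_iff g z i).mpr hc))]; ring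

lemma key_sum {n : ℕ} (g : Fin n → Fin n → Bool) (i : Fin n)
    (F : (Fin n → Bool) → ℝ) (c : ℝ)
    (h0 : ∑ z, F z = c)
    (h1 : ∀ z' : {j : Fin n // g j i = true} → Bool, z' ≠ (fun _ => false) →
      ∑ z, F z * (if (fun j : {j : Fin n // g j i = true} => z j.1) = z' then (1:ℝ) else 0) = 0) :
    ∑ z, F z * (if trDeg g z i = 0 then (1:ℝ) else 0) = c := by
  have e : ∀ z : Fin n → Bool, F z * (if trDeg g z i = 0 then (1:ℝ) else 0)
      = F z - ∑ z' ∈ Finset.univ.erase (fun _ : {j : Fin n // g j i = true} => false),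
          F z * (if (fun j : {j : Fin n // g j i = true} => z j.1) = z' then (1:ℝ) else 0) := by
    intro z
    rw [delta_eq g z i, mul_sub, mul_one, Finset.mul_sum]
  rw [Finset.sum_congr rfl (fun z _ => e z), Finset.sum_sub_distrib, h0, Finset.sum_comm]
  rw [Finset.sum_eq_zero (fun z' hz' => h1 z' (Finset.ne_of_mem_erase hz')), sub_zero]

/-- Constraint-derived fact A: `∑_z p(z) w_i(z) z_i 1{d_i=0} = 1/n`. -/
lemma keyA {n : ℕ} {g : Fin n → Fin n → Bool} {p : (Fin n → Bool) → ℝ}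
    {w : Fin n → (Fin n → Bool) → ℝ} (hw : ConstraintsNIA g p w) (i : Fin n) :
    ∑ z, p z * w i z * (if z i then (1:ℝ) else 0) * (if trDeg g z i = 0 then (1:ℝ) else 0)
      = 1 / (n : ℝ) :=
  key_sum g i (fun z => p z * w i z * (if z i then (1:ℝ) else 0)) _ (hw i).1 (hw i).2.2.2

/-- Constraint-derived fact B: `∑_z p(z) w_i(z) 1{d_i=0} = 0`. -/
lemma keyB {n : ℕ} {g : Fin n → Fin n → Bool} {p : (Fin n → Bool) → ℝ}
    {w : Fin n → (Fin n → Bool) → ℝ} (hw : ConstraintsNIA g p w) (i : Fin n) :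
    ∑ z, p z * w i z * (if trDeg g z i = 0 then (1:ℝ) else 0) = 0 :=
  key_sum g i (fun z => p z * w i z) _ (hw i).2.1 (hw i).2.2.1

/-- NIA, uncorrelated prior: the weights
`w*ᵢ(z) = (2zᵢ-1) 1{dᵢ^z = 0}/(n πᵢ(zᵢ))` satisfy the NIA unbiasedness constraints
C1–C4 and minimize `IV(w) = ∑_z p(z) ∑ᵢ wᵢ(z)² σᵢ(z)` among all weights satisfying
them; in particular the minimizer places nonzero weight only on units with no
treated neighbors. -/
theorem stmt_16 (n : ℕ) (hn : 1 ≤ n)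
    (g : Fin n → Fin n → Bool) (hg : ∀ i, g i i = false)
    (p : (Fin n → Bool) → ℝ) (hp0 : ∀ z, 0 ≤ p z) (hp1 : ∑ z, p z = 1)
    (σ : Fin n → (Fin n → Bool) → ℝ) (hσpos : ∀ i z, 0 < σ i z)
    (hσdep : ∀ (i : Fin n) (z z' : Fin n → Bool), z i = z' i →
      (∀ j, g j i = true → z j = z' j) → σ i z = σ i z')
    (π : Fin n → Bool → ℝ)
    (hπdef : ∀ i a, π i a =
      ∑ z, p z * (if z i = a ∧ trDeg g z i = 0 then (1 : ℝ) else 0))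
    (hπpos : ∀ i a, 0 < π i a)
    (wstar : Fin n → (Fin n → Bool) → ℝ)
    (hws : ∀ i z, wstar i z =
      ((if z i then (2 : ℝ) else 0) - 1) * (if trDeg g z i = 0 then (1 : ℝ) else 0)
        / ((n : ℝ) * π i (z i))) :
    (ConstraintsNIA g p wstar ∧
      (∀ w : Fin n → (Fin n → Bool) → ℝ, ConstraintsNIA g p w →
        (∑ z, p z * ∑ i, (wstar i z) ^ 2 * σ i z) ≤
          (∑ z, p z * ∑ i, (w i z) ^ 2 * σ i z))) := by
  have hne : (n : ℝ) ≠ 0 := by positivity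
  -- wstar satisfies the constraints
  have hCws : ConstraintsNIA g p wstar := by
    intro i
    have hπt : π i true ≠ 0 := (hπpos i true).ne'
    have hπf : π i false ≠ 0 := (hπpos i false).ne'
    refine ⟨?_, ?_, ?_, ?_⟩
    · -- C1
      have e : ∀ z : Fin n → Bool, p z * wstar i z * (if z i then (1 : ℝ) else 0)
          = p z * (if z i = true ∧ trDeg g z i = 0 then (1:ℝ) else 0) * ((n : ℝ) * π i true)⁻¹ := by
        intro z
        by_cases h1 : z i <;> by_cases h2 : trDeg g z i = 0 <;>
          simp [hws, h1, h2, -mul_eq_mul_left_iff] <;> ring1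
      rw [Finset.sum_congr rfl (fun z _ => e z), ← Finset.sum_mul, ← hπdef i true]
      field_simp
    · -- C2
      have e : ∀ z : Fin n → Bool, p z * wstar i z
          = p z * (if z i = true ∧ trDeg g z i = 0 then (1:ℝ) else 0) * ((n : ℝ) * π i true)⁻¹
            - p z * (if z i = false ∧ trDeg g z i = 0 then (1:ℝ) else 0) * ((n : ℝ) * π i false)⁻¹ := by
        intro z
        by_cases h1 : z i <;> by_cases h2 : trDeg g z i = 0 <;>
          simp [hws, h1, h2, -mul_eq_mul_left_iff] <;> ring1
      rw [Finset.sum_congr rfl (fun z _ => e z), Finset.sum_sub_distrib,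
        ← Finset.sum_mul, ← Finset.sum_mul, ← hπdef i true, ← hπdef i false]
      field_simp
      ring
    · -- C3
      intro z' hz'
      refine Finset.sum_eq_zero fun z _ => ?_
      by_cases h : (fun j : {j : Fin n // g j i = true} => z j.1) = z'
      · have hd : trDeg g z i ≠ 0 := fun hc => hz' (h ▸ (trDeg_eq_zero_iff g z i).mp hc)
        simp [hws, hd]
      · simp [h]
    · -- C4
      intro z' hz'
      refine Finset.sum_eq_zero fun z _ => ?_
      by_cases h : (fun j : {j : Fin n // g j i = true} => z j.1) = z'
      · have hd : trDeg g z i ≠ 0 := fun hc => hz' (h ▸ (trDeg_eq_zero_iff g z i).mp hc)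
        simp [hws, hd]
      · simp [h]
  refine ⟨hCws, ?_⟩
  intro w hw
  -- cross terms vanish
  have hcross : ∀ i, ∑ z, p z * (w i z - wstar i z) * wstar i z * σ i z = 0 := by
    intro i
    have hA : ∑ z, p z * (w i z - wstar i z) * (if z i then (1:ℝ) else 0)
        * (if trDeg g z i = 0 then (1:ℝ) else 0) = 0 := by
      have e : ∀ z : Fin n → Bool, p z * (w i z - wstar i z) * (if z i then (1:ℝ) else 0)
            * (if trDeg g z i = 0 then (1:ℝ) else 0)
          = p z * w i z * (if z i then (1:ℝ) else 0) * (if trDeg g z i = 0 then (1:ℝ) else 0)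
            - p z * wstar i z * (if z i then (1:ℝ) else 0)
              * (if trDeg g z i = 0 then (1:ℝ) else 0) := fun z => by ring
      rw [Finset.sum_congr rfl (fun z _ => e z), Finset.sum_sub_distrib,
        keyA hw i, keyA hCws i, sub_self]
    have hB : ∑ z, p z * (w i z - wstar i z) * (if trDeg g z i = 0 then (1:ℝ) else 0) = 0 := by
      have e : ∀ z : Fin n → Bool, p z * (w i z - wstar i z)
            * (if trDeg g z i = 0 then (1:ℝ) else 0)
          = p z * w i z * (if trDeg g z i = 0 then (1:ℝ) else 0)
            - p z * wstar i z * (if trDeg g z i = 0 then (1:ℝ) else 0) := fun z => by ring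
      rw [Finset.sum_congr rfl (fun z _ => e z), Finset.sum_sub_distrib,
        keyB hw i, keyB hCws i, sub_self]
    -- wstar * σ depends only on (z i, 1{d=0})
    have hterm : ∀ z : Fin n → Bool, wstar i z * σ i z
        = (if z i then (1:ℝ) else 0) * (if trDeg g z i = 0 then (1:ℝ) else 0)
            * (σ i (fun j => if j = i then true else false) / ((n : ℝ) * π i true))
          - (1 - (if z i then (1:ℝ) else 0)) * (if trDeg g z i = 0 then (1:ℝ) else 0)
            * (σ i (fun _ => false) / ((n : ℝ) * π i false)) := by
      intro z
      by_cases h2 : trDeg g z i = 0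
      · by_cases h1 : z i
        · have hσ : σ i z = σ i (fun j => if j = i then true else false) := by
            refine hσdep i z _ (by simp [h1]) (fun j hj => ?_)
            have hji : j ≠ i := fun he => by rw [he, hg i] at hj; exact Bool.false_ne_true hj
            simp [hji, trDeg_zero_nb g z i h2 j hj]
          rw [hws, hσ]
          simp only [h1, h2, if_true]
          ring
        · have h1' : z i = false := by simpa using h1
          have hσ : σ i z = σ i (fun _ => false) := by
            refine hσdep i z _ (by simp [h1']) (fun j hj => ?_)
            simp [trDeg_zero_nb g z i h2 j hj]
          rw [hws, hσ, h1']
          simp only [h2, if_true, Bool.false_eq_true, if_false]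
          ring
      · rw [hws]
        simp only [h2, if_false]
        ring
    have e2 : ∀ z : Fin n → Bool, p z * (w i z - wstar i z) * wstar i z * σ i z
        = (p z * (w i z - wstar i z) * (if z i then (1:ℝ) else 0)
              * (if trDeg g z i = 0 then (1:ℝ) else 0))
            * (σ i (fun j => if j = i then true else false) / ((n : ℝ) * π i true))
          - ((p z * (w i z - wstar i z) * (if trDeg g z i = 0 then (1:ℝ) else 0))
              - (p z * (w i z - wstar i z) * (if z i then (1:ℝ) else 0)
                  * (if trDeg g z i = 0 then (1:ℝ) else 0)))
            * (σ i (fun _ => false) / ((n : ℝ) * π i false)) := by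
      intro z
      have h := hterm z
      calc p z * (w i z - wstar i z) * wstar i z * σ i z
          = p z * (w i z - wstar i z) * (wstar i z * σ i z) := by ring
        _ = _ := by rw [h]; ring
    rw [Finset.sum_congr rfl (fun z _ => e2 z), Finset.sum_sub_distrib,
      ← Finset.sum_mul, ← Finset.sum_mul, Finset.sum_sub_distrib, hA, hB]
    norm_num
  -- expansion of the objective
  have key : ∀ z : Fin n → Bool, p z * ∑ i, (w i z) ^ 2 * σ i z
      = p z * ∑ i, (wstar i z) ^ 2 * σ i z
        + p z * ∑ i, (w i z - wstar i z) ^ 2 * σ i z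
        + ∑ i, 2 * (p z * (w i z - wstar i z) * wstar i z * σ i z) := by
    intro z
    simp only [Finset.mul_sum, ← Finset.sum_add_distrib]
    exact Finset.sum_congr rfl fun i _ => by ring
  have h1 : ∑ z, p z * ∑ i, (w i z) ^ 2 * σ i z
      = (∑ z, p z * ∑ i, (wstar i z) ^ 2 * σ i z)
        + (∑ z, p z * ∑ i, (w i z - wstar i z) ^ 2 * σ i z)
        + ∑ z, ∑ i, 2 * (p z * (w i z - wstar i z) * wstar i z * σ i z) := by
    rw [Finset.sum_congr rfl (fun z _ => key z), Finset.sum_add_distrib, Finset.sum_add_distrib]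
  rw [Finset.sum_comm] at h1
  have h2 : ∑ i, ∑ z, 2 * (p z * (w i z - wstar i z) * wstar i z * σ i z) = 0 := by
    refine Finset.sum_eq_zero fun i _ => ?_
    rw [← Finset.mul_sum, hcross i, mul_zero]
  have h3 : 0 ≤ ∑ z, p z * ∑ i, (w i z - wstar i z) ^ 2 * σ i z := by
    refine Finset.sum_nonneg fun z _ => mul_nonneg (hp0 z) ?_
    exact Finset.sum_nonneg fun i _ => mul_nonneg (sq_nonneg _) (hσpos i z).le
  rw [h2] at h1
  linarith
end
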